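/- Gaussian integration-by-parts identity for the Brownian crossing probability (identity (eq:refl)): let f : ℝ → ℝ be continuously differentiable with f and f′ bounded. Then for every t > 0 the map x ↦ ∫_ℝ f(x+w)·(1 − p_t(x, x+w))·g_t(w) dw is differentiable on ℝ and for every x its derivative equals ∫_ℝ f′(x+w)·(1 + p_t(x, x+w))·g_t(w) dw; in particular ∫_ℝ f(x+w)·∂_x[p_t(x, x+w)]·g_t(w) dw = −2·∫_ℝ f′(x+w)·p_t(x, x+w)·g_t(w) dw, where ∂_x[p_t(x, x+w)] is the derivative of x ↦ p_t(x, x+w) with w held fixed. -/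

import Mathlib

open Real MeasureTheory

/-!
The reflection principle in kernel form: `pₜ(x, x + w) gₜ(w) = gₜ(w + 2(x − L))`. After a
translation, the integrals against `pₜ gₜ` become `∫ φ(2L − x + u) gₜ(u) du`, a Gaussian
convolution evaluated at the mirror image `2L − x` of `x`. Differentiating under the integral
sign (the reflection flips the sign of the derivative) gives the first identity. For the
second, `∂ₓ pₜ(x, x + w) gₜ(w) = −(2(w + 2(x − L))/t) gₜ(w + 2(x − L))`, so after the same
translation it is Gaussian integration by parts, `∫ φ(u) (u/t) gₜ(u) du = ∫ φ'(u) gₜ(u) du`.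
-/

noncomputable def heatKernel (t z : ℝ) : ℝ :=
  1 / √(2 * π * t) * exp (-z ^ 2 / (2 * t))

noncomputable def crossingProb (L t x y : ℝ) : ℝ :=
  exp (-2 * (y - L) * (x - L) / t)

lemma integrable_comp_add_mul {g φ : ℝ → ℝ} (hg : Integrable g) (hφ : Continuous φ) {C : ℝ}
    (hC : ∀ z, |φ z| ≤ C) (a : ℝ) : Integrable (fun u => φ (a + u) * g u) :=
  hg.bdd_mul (hφ.comp (continuous_const_add a)).aestronglyMeasurable
    (ae_of_all _ fun u => hC (a + u))

lemma hasDerivAt_integral_comp_add_mul {g φ : ℝ → ℝ} (hg : Integrable g) (hφ : ContDiff ℝ 1 φ)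
    {C C' : ℝ} (hC : ∀ z, |φ z| ≤ C) (hC' : ∀ z, |deriv φ z| ≤ C') (x : ℝ) :
    HasDerivAt (fun y => ∫ u, φ (y + u) * g u) (∫ u, deriv φ (x + u) * g u) x := by
  have hφ' : Continuous (deriv φ) := hφ.continuous_deriv le_rfl
  refine (hasDerivAt_integral_of_dominated_loc_of_deriv_le (F := fun y u => φ (y + u) * g u)
    (F' := fun y u => deriv φ (y + u) * g u) (bound := fun u => C' * |g u|)
    (Metric.ball_mem_nhds x one_pos)
    (.of_forall fun y => ((hφ.continuous.comp (continuous_const_add y)).aestronglyMeasurable.mul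
      hg.aestronglyMeasurable))
    (integrable_comp_add_mul hg hφ.continuous hC x)
    ((hφ'.comp (continuous_const_add x)).aestronglyMeasurable.mul hg.aestronglyMeasurable)
    (ae_of_all _ fun u y _ => ?_) (hg.abs.const_mul C') (ae_of_all _ fun u y _ => ?_)).2
  · rw [norm_mul, Real.norm_eq_abs, Real.norm_eq_abs]
    exact mul_le_mul_of_nonneg_right (hC' _) (abs_nonneg _)
  · have hshift : HasDerivAt (fun y => φ (y + u)) (deriv φ (y + u)) y := by
      simpa using (hφ.differentiable one_ne_zero (y + u)).hasDerivAt.comp_add_const y u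
    exact hshift.mul_const (g u)

section heatKernel

variable {t : ℝ}

lemma heatKernel_eq_mul_exp_neg_mul_sq (t z : ℝ) :
    heatKernel t z = 1 / √(2 * π * t) * exp (-(2 * t)⁻¹ * z ^ 2) := by
  rw [heatKernel]
  congr 2
  ring

lemma integrable_heatKernel (ht : 0 < t) : Integrable (heatKernel t) := by
  simp_rw [funext (heatKernel_eq_mul_exp_neg_mul_sq t)]
  exact (integrable_exp_neg_mul_sq (by positivity)).const_mul _

lemma integrable_mul_heatKernel (ht : 0 < t) : Integrable (fun z => z * heatKernel t z) := by
  simp_rw [heatKernel_eq_mul_exp_neg_mul_sq t, mul_left_comm _ (1 / √(2 * π * t))]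
  exact (integrable_mul_exp_neg_mul_sq (by positivity)).const_mul _

lemma hasDerivAt_heatKernel (t z : ℝ) :
    HasDerivAt (heatKernel t) (-(z / t) * heatKernel t z) z := by
  have hq : HasDerivAt (fun y : ℝ => -y ^ 2 / (2 * t)) (-(2 * z) / (2 * t)) z := by
    simpa using (hasDerivAt_pow 2 z).neg.div_const (2 * t)
  unfold heatKernel
  exact (hq.exp.const_mul _).congr_deriv (by ring)

lemma integral_mul_heatKernel_eq_integral_deriv_mul (ht : 0 < t) {φ : ℝ → ℝ}
    (hφ : ContDiff ℝ 1 φ) {C C' : ℝ} (hC : ∀ z, |φ z| ≤ C) (hC' : ∀ z, |deriv φ z| ≤ C') :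
    ∫ u, φ u * (u / t * heatKernel t u) = ∫ u, deriv φ u * heatKernel t u := by
  have hg := integrable_heatKernel ht
  have hg' : Integrable (fun u => -(u / t) * heatKernel t u) :=
    ((integrable_mul_heatKernel ht).const_mul (-t⁻¹)).congr (ae_of_all _ fun u => by ring)
  have hφg' : Integrable (fun u => φ u * (-(u / t) * heatKernel t u)) := by
    simpa only [zero_add] using integrable_comp_add_mul hg' hφ.continuous hC 0
  have hφ'g : Integrable (fun u => deriv φ u * heatKernel t u) := by
    simpa only [zero_add] using integrable_comp_add_mul hg (hφ.continuous_deriv le_rfl) hC' 0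
  have hφg : Integrable (fun u => φ u * heatKernel t u) := by
    simpa only [zero_add] using integrable_comp_add_mul hg hφ.continuous hC 0
  have hparts := integral_mul_deriv_eq_deriv_mul_of_integrable
    (fun u _ => (hφ.differentiable one_ne_zero u).hasDerivAt)
    (fun u _ => hasDerivAt_heatKernel t u) hφg' hφ'g hφg
  rw [← neg_eq_iff_eq_neg.mpr hparts, ← integral_neg]
  congr 1 with u
  ring

end heatKernel

section crossingProb

variable {L t : ℝ}

lemma crossingProb_mul_heatKernel (ht : t ≠ 0) (x w : ℝ) :
    crossingProb L t x (x + w) * heatKernel t w = heatKernel t (w + 2 * (x - L)) := by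
  rw [crossingProb, heatKernel, heatKernel, mul_left_comm, ← exp_add]
  congr 2
  field_simp
  ring

lemma integral_mul_crossingProb_mul_heatKernel (ht : t ≠ 0) (φ : ℝ → ℝ) (x : ℝ) :
    ∫ w, φ (x + w) * crossingProb L t x (x + w) * heatKernel t w
      = ∫ u, φ (2 * L - x + u) * heatKernel t u := by
  conv_rhs => rw [← integral_add_right_eq_self _ (2 * (x - L))]
  congr 1 with w
  rw [mul_assoc, crossingProb_mul_heatKernel ht, show 2 * L - x + (w + 2 * (x - L)) = x + w by ring]

lemma integrable_mul_crossingProb_mul_heatKernel (ht : 0 < t) {φ : ℝ → ℝ} (hφ : Continuous φ)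
    {C : ℝ} (hC : ∀ z, |φ z| ≤ C) (x : ℝ) :
    Integrable (fun w => φ (x + w) * crossingProb L t x (x + w) * heatKernel t w) := by
  simp_rw [mul_assoc, crossingProb_mul_heatKernel ht.ne']
  exact integrable_comp_add_mul ((integrable_heatKernel ht).comp_add_right _) hφ hC x

lemma hasDerivAt_crossingProb_diag (L t x w : ℝ) :
    HasDerivAt (fun y => crossingProb L t y (y + w))
      (crossingProb L t x (x + w) * (-2 * (w + 2 * (x - L)) / t)) x := by
  have hq := (((((hasDerivAt_id' x).add_const w).sub_const L).const_mul (-2)).mul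
    ((hasDerivAt_id' x).sub_const L)).div_const t
  simp only [Pi.mul_apply] at hq
  exact hq.exp.congr_deriv (by rw [crossingProb]; ring)

variable {f : ℝ → ℝ} {C C' : ℝ}

lemma hasDerivAt_integral_mul_one_sub_crossingProb (ht : 0 < t) (hf : ContDiff ℝ 1 f)
    (hC : ∀ z, |f z| ≤ C) (hC' : ∀ z, |deriv f z| ≤ C') (x : ℝ) :
    HasDerivAt (fun y => ∫ w, f (y + w) * (1 - crossingProb L t y (y + w)) * heatKernel t w)
      (∫ w, deriv f (x + w) * (1 + crossingProb L t x (x + w)) * heatKernel t w) x := by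
  have hg := integrable_heatKernel (t := t) ht
  have hf' := hf.continuous_deriv le_rfl
  have hsplit : ∀ y, ∫ w, f (y + w) * (1 - crossingProb L t y (y + w)) * heatKernel t w
      = (∫ u, f (y + u) * heatKernel t u) - ∫ u, f (2 * L - y + u) * heatKernel t u := by
    intro y
    rw [← integral_mul_crossingProb_mul_heatKernel ht.ne', ← integral_sub
      (integrable_comp_add_mul hg hf.continuous hC y)
      (integrable_mul_crossingProb_mul_heatKernel ht hf.continuous hC y)]
    congr 1 with w
    ring
  have hvalue : ∫ w, deriv f (x + w) * (1 + crossingProb L t x (x + w)) * heatKernel t w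
      = (∫ u, deriv f (x + u) * heatKernel t u)
        + ∫ u, deriv f (2 * L - x + u) * heatKernel t u := by
    rw [← integral_mul_crossingProb_mul_heatKernel ht.ne', ← integral_add
      (integrable_comp_add_mul hg hf' hC' x)
      (integrable_mul_crossingProb_mul_heatKernel ht hf' hC' x)]
    congr 1 with w
    ring
  have hdirect := hasDerivAt_integral_comp_add_mul hg hf hC hC' x
  have hmirror := (hasDerivAt_integral_comp_add_mul hg hf hC hC' (2 * L - x)).comp x
    ((hasDerivAt_id' x).const_sub (2 * L))
  rw [funext hsplit, hvalue]
  exact (hdirect.sub hmirror).congr_deriv (by ring)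

lemma integral_mul_deriv_crossingProb (ht : 0 < t) (hf : ContDiff ℝ 1 f)
    (hC : ∀ z, |f z| ≤ C) (hC' : ∀ z, |deriv f z| ≤ C') (x : ℝ) :
    ∫ w, f (x + w) * deriv (fun y => crossingProb L t y (y + w)) x * heatKernel t w
      = -2 * ∫ w, deriv f (x + w) * crossingProb L t x (x + w) * heatKernel t w := by
  have hstein := integral_mul_heatKernel_eq_integral_deriv_mul (φ := fun u => f (2 * L - x + u)) ht
    (hf.comp (contDiff_const.add contDiff_id))
    (fun _ => hC _) (fun u => by rw [deriv_comp_const_add]; exact hC' _)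
  simp only [deriv_comp_const_add] at hstein
  simp_rw [(hasDerivAt_crossingProb_diag L t x _).deriv]
  calc ∫ w, f (x + w) * (crossingProb L t x (x + w) * (-2 * (w + 2 * (x - L)) / t)) * heatKernel t w
      = ∫ w, (fun y => f y * (-2 * (y + x - 2 * L) / t)) (x + w) * crossingProb L t x (x + w)
          * heatKernel t w := by
        congr 1 with w
        ring
    _ = ∫ u, f (2 * L - x + u) * (-2 * u / t) * heatKernel t u := by
        rw [integral_mul_crossingProb_mul_heatKernel ht.ne'
          (fun y => f y * (-2 * (y + x - 2 * L) / t))]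
        congr 1 with u
        ring
    _ = -2 * ∫ u, f (2 * L - x + u) * (u / t * heatKernel t u) := by
        rw [← integral_const_mul]
        congr 1 with u
        ring
    _ = _ := by rw [hstein, integral_mul_crossingProb_mul_heatKernel ht.ne']

end crossingProb

/-- Gaussian integration-by-parts identity for the Brownian crossing probability
`pₜ(x,y) = exp(−2(y−L)(x−L)/t)`: the map `x ↦ ∫ f(x+w)(1 − pₜ(x,x+w)) gₜ(w) dw` is
differentiable with derivative `∫ f'(x+w)(1 + pₜ(x,x+w)) gₜ(w) dw`; in particular
`∫ f(x+w) ∂ₓ[pₜ(x,x+w)] gₜ(w) dw = −2 ∫ f'(x+w) pₜ(x,x+w) gₜ(w) dw`. -/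
theorem stmt_19 (L t : ℝ) (ht : 0 < t)
    (g : ℝ → ℝ)
    (hg : ∀ z, g z = (1 / Real.sqrt (2 * Real.pi * t)) * Real.exp (-z ^ 2 / (2 * t)))
    (p : ℝ → ℝ → ℝ)
    (hp : ∀ x y, p x y = Real.exp (-2 * (y - L) * (x - L) / t))
    (f : ℝ → ℝ) (hf : ContDiff ℝ 1 f)
    (hfb : ∃ C, ∀ z, |f z| ≤ C) (hf'b : ∃ C, ∀ z, |deriv f z| ≤ C)
    (x : ℝ) :
    HasDerivAt (fun x' => ∫ w : ℝ, f (x' + w) * (1 - p x' (x' + w)) * g w)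
        (∫ w : ℝ, deriv f (x + w) * (1 + p x (x + w)) * g w) x
      ∧ (∫ w : ℝ, f (x + w) * deriv (fun x' => p x' (x' + w)) x * g w)
        = -2 * ∫ w : ℝ, deriv f (x + w) * p x (x + w) * g w := by
  obtain rfl : g = heatKernel t := funext hg
  obtain rfl : p = crossingProb L t := funext₂ hp
  obtain ⟨C, hC⟩ := hfb
  obtain ⟨C', hC'⟩ := hf'b
  exact ⟨hasDerivAt_integral_mul_one_sub_crossingProb ht hf hC hC' x,
    integral_mul_deriv_crossingProb ht hf hC hC' x⟩
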